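/- arXiv:2501.05364 — 3 statements merged into one kernel-verified Lean document; each statement's English description precedes it below -/
import Mathlib

section
/- Every closed set in the hypercube Q_n (n ≥ 1) has cardinality at least n + 1, and hence (being of even size) at least n + 2 when n is even, and at least n + 1 when n is odd. -/
/-- A nonempty set `U` of vertices of the hypercube `Q_n` (whose graph distance is
Hamming distance) is *closed* if for every `u ∈ U` and every vertex `v` there is
`x ∈ U` with `dist(u,v) = dist(u,x)`. -/
def QClosed (n : ℕ) (U : Finset (Fin n → Bool)) : Prop :=
  U.Nonempty ∧ ∀ u ∈ U, ∀ v : Fin n → Bool, ∃ x ∈ U, hammingDist u v = hammingDist u x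

lemma card_filter_val_lt (n d : ℕ) (hd : d ≤ n) :
    (Finset.univ.filter (fun i : Fin n => i.val < d)).card = d := by
  have himg : (Finset.univ.filter (fun i : Fin n => i.val < d)).image Fin.val
      = Finset.range d := by
    ext j
    simp only [Finset.mem_image, Finset.mem_filter, Finset.mem_univ, true_and,
      Finset.mem_range]
    constructor
    · rintro ⟨i, hi, rfl⟩; exact hi
    · intro hj; exact ⟨⟨j, lt_of_lt_of_le hj hd⟩, hj, rfl⟩
  calc (Finset.univ.filter (fun i : Fin n => i.val < d)).card
      = ((Finset.univ.filter (fun i : Fin n => i.val < d)).image Fin.val).card :=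
        (Finset.card_image_of_injective _ Fin.val_injective).symm
    _ = d := by rw [himg, Finset.card_range]

lemma hammingDist_exists (n : ℕ) (u : Fin n → Bool) (d : ℕ) (hd : d ≤ n) :
    ∃ v : Fin n → Bool, hammingDist u v = d := by
  refine ⟨fun i => if i.val < d then !(u i) else u i, ?_⟩
  unfold hammingDist
  have : (Finset.univ.filter
      (fun i : Fin n => u i ≠ if i.val < d then !(u i) else u i))
      = Finset.univ.filter (fun i : Fin n => i.val < d) := by
    apply Finset.filter_congr
    intro i _
    by_cases h : i.val < d <;> simp [h]
  rw [show ({i | u i ≠ if i.val < d then !(u i) else u i} : Finset (Fin n))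
      = Finset.univ.filter (fun i : Fin n => u i ≠ if i.val < d then !(u i) else u i) from rfl,
    this, card_filter_val_lt n d hd]

lemma hammingDist_not (n : ℕ) (u : Fin n → Bool) :
    hammingDist u (fun i => !(u i)) = n := by
  unfold hammingDist
  have : ({i | u i ≠ !(u i)} : Finset (Fin n)) = Finset.univ := by
    ext i; simp
  rw [this, Finset.card_univ, Fintype.card_fin]

lemma eq_not_of_hammingDist_eq (n : ℕ) (u x : Fin n → Bool)
    (h : hammingDist u x = n) : x = fun i => !(u i) := by
  unfold hammingDist at h
  have huniv : ({i | u i ≠ x i} : Finset (Fin n)) = Finset.univ := by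
    apply Finset.eq_univ_of_card
    rw [h, Fintype.card_fin]
  funext i
  have : u i ≠ x i := by
    have := huniv ▸ Finset.mem_univ i
    simpa using (Finset.mem_filter.mp this).2
  cases hu : u i <;> cases hx : x i <;> simp_all

theorem closed_card_ge_n_add_one (n : ℕ) (hn : 1 ≤ n) (U : Finset (Fin n → Bool))
    (hU : QClosed n U) :
    n + 1 ≤ U.card ∧ (Even n → n + 2 ≤ U.card) := by
  classical
  obtain ⟨⟨u, hu⟩, hclosed⟩ := hU
  -- part 1: image of hammingDist u on U contains all of range (n+1)
  have hsub : Finset.range (n + 1) ⊆ U.image (hammingDist u) := by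
    intro d hd
    rw [Finset.mem_range] at hd
    obtain ⟨v, hv⟩ := hammingDist_exists n u d (Nat.lt_succ_iff.mp hd)
    obtain ⟨x, hx, hdx⟩ := hclosed u hu v
    exact Finset.mem_image.mpr ⟨x, hx, by rw [← hdx, hv]⟩
  have h1 : n + 1 ≤ U.card := by
    calc n + 1 = (Finset.range (n + 1)).card := (Finset.card_range _).symm
      _ ≤ (U.image (hammingDist u)).card := Finset.card_le_card hsub
      _ ≤ U.card := Finset.card_image_le
  -- part 2: U is closed under the antipodal map, hence has even cardinality
  have hanti : ∀ a ∈ U, (fun i => !(a i)) ∈ U := by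
    intro a ha
    obtain ⟨x, hx, hdx⟩ := hclosed a ha (fun i => !(a i))
    rw [hammingDist_not] at hdx
    have := eq_not_of_hammingDist_eq n a x hdx.symm
    rwa [← this]
  have heven : Even U.card := by
    have hsum : ∑ _x ∈ U, (1 : ZMod 2) = 0 := by
      refine Finset.sum_involution (fun a _ => fun i => !(a i)) ?_ ?_ ?_ ?_
      · intro a _; decide
      · intro a _ h
        intro habs
        have := congrFun habs ⟨0, hn⟩
        simp at this
      · intro a ha; exact hanti a ha
      · intro a _; funext i; simp
    rw [Finset.sum_const, nsmul_eq_mul, mul_one] at hsum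
    have : (2 : ℕ) ∣ U.card := (ZMod.natCast_eq_zero_iff _ _).mp hsum
    exact even_iff_two_dvd.mpr this
  refine ⟨h1, fun hne => ?_⟩
  rcases heven with ⟨k, hk⟩
  rcases hne with ⟨m, hm⟩
  omega
end

section
/- For every integer k ≥ 1, every closed set in the hypercube Q_{4k+1} has cardinality at least 4k + 4. -/
/-!
Split `U` by the parity of the Hamming weight; the parity of `d(u, x)` is the sum of the
parities of `u` and `x`. Every distance `0, …, n` from a fixed `u ∈ U` is realized in `U`, so
for `n = 2m + 1` each parity class contains at least `m + 1` vertices. If `|U| ≤ 4k + 3` with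
`n = 4k + 1`, some class `C` has exactly `2k + 1` elements. Then for every `u ∈ C` the map
`x ↦ d(u, x)` is a bijection from `C` onto `{0, 2, …, 4k}`, so `u` has exactly one partner in
`C` at distance `2`. This pairs off the elements of `C`, whose number is odd.
-/

open Finset

theorem Finset.even_card_of_existsUnique_partner {α : Type*} {s : Finset α} {r : α → α → Prop}
    (hsymm : ∀ a b, r a b → r b a) (hirr : ∀ a, ¬ r a a) (h : ∀ a ∈ s, ∃! b, b ∈ s ∧ r a b) :
    Even #s := by
  choose g hg hg_unique using h
  have hsum : ∑ _a ∈ s, (1 : ZMod 2) = 0 :=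
    sum_involution g (fun _ _ => by decide)
      (fun a ha _ hfix => hirr a (by simpa [hfix] using (hg a ha).2))
      (fun a ha => (hg a ha).1)
      (fun a ha => (hg_unique _ _ a ⟨ha, hsymm _ _ (hg a ha).2⟩).symm)
  simpa [ZMod.natCast_eq_zero_iff_even] using hsum

theorem Finset.card_filter_range_two_mul_natCast_eq (m : ℕ) (q : ZMod 2) :
    #{d ∈ range (2 * m) | ((d : ℕ) : ZMod 2) = q} = m := by
  induction m with
  | zero => simp
  | succ m ih =>
    have heven : ((2 * m : ℕ) : ZMod 2) = 0 := ZMod.natCast_eq_zero_iff_even.2 (even_two_mul m)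
    have h_even_notMem : 2 * m ∉ ({d ∈ range (2 * m) | ((d : ℕ) : ZMod 2) = q}) := by simp
    have h_odd_notMem : 2 * m + 1 ∉ ({d ∈ range (2 * m) | ((d : ℕ) : ZMod 2) = q}) := by simp
    rw [show 2 * (m + 1) = 2 * m + 1 + 1 by ring, range_add_one, range_add_one, filter_insert,
      filter_insert, Nat.cast_succ, heven, zero_add]
    obtain rfl | rfl := (by decide : ∀ q : ZMod 2, q = 0 ∨ q = 1) q
    · simp [card_insert_of_notMem h_even_notMem, ih]
    · simp [card_insert_of_notMem h_odd_notMem, ih]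

section Hamming

variable {ι : Type*} [Fintype ι]

def weightParity (x : ι → Bool) : ZMod 2 := ∑ i, ((x i).toNat : ZMod 2)

def parityClass (U : Finset (ι → Bool)) (p : ZMod 2) : Finset (ι → Bool) :=
  {x ∈ U | weightParity x = p}

theorem card_eq_card_parityClass_zero_add_one (U : Finset (ι → Bool)) :
    #U = #(parityClass U 0) + #(parityClass U 1) := by
  rw [parityClass, parityClass, ← card_filter_add_card_filter_not (fun x => weightParity x = 0),
    filter_congr fun x _ => (by decide : ∀ a : ZMod 2, ¬a = 0 ↔ a = 1) (weightParity x)]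

theorem natCast_hammingDist (u v : ι → Bool) :
    (hammingDist u v : ZMod 2) = weightParity u + weightParity v := by
  rw [hammingDist, card_filter, Nat.cast_sum, weightParity, weightParity, ← sum_add_distrib]
  refine sum_congr rfl fun i _ => ?_
  cases u i <;> cases v i <;> decide

theorem weightParity_eq_add_hammingDist (u v : ι → Bool) :
    weightParity v = weightParity u + hammingDist u v := by
  rw [natCast_hammingDist, ← add_assoc, CharTwo.add_self_eq_zero, zero_add]

theorem exists_hammingDist_eq [DecidableEq ι] (u : ι → Bool) {d : ℕ}
    (hd : d ≤ Fintype.card ι) : ∃ v, hammingDist u v = d := by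
  obtain ⟨s, -, rfl⟩ := exists_subset_card_eq (s := univ) hd
  refine ⟨fun i => if i ∈ s then !u i else u i, congrArg card ?_⟩
  ext i
  by_cases hi : i ∈ s <;> simp [hi]

theorem mapsTo_hammingDist_parityClass (U : Finset (ι → Bool)) (u : ι → Bool) (q : ZMod 2) :
    Set.MapsTo (hammingDist u) (parityClass U (weightParity u + q))
      ({d ∈ range (Fintype.card ι + 1) | (d : ZMod 2) = q} : Finset ℕ) := by
  intro x hx
  simp only [parityClass, mem_coe, mem_filter, mem_range] at hx ⊢
  rw [weightParity_eq_add_hammingDist u x] at hx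
  exact ⟨Nat.lt_succ_of_le hammingDist_le_card_fintype, add_left_cancel hx.2⟩

end Hamming

namespace QClosed

variable {n : ℕ} {U : Finset (Fin n → Bool)}

theorem exists_mem_hammingDist_eq (hU : QClosed n U) {u : Fin n → Bool} (hu : u ∈ U) {d : ℕ}
    (hd : d ≤ n) : ∃ x ∈ U, hammingDist u x = d := by
  obtain ⟨v, rfl⟩ := exists_hammingDist_eq u (hd.trans_eq (Fintype.card_fin n).symm)
  obtain ⟨x, hx, hux⟩ := hU.2 u hu v
  exact ⟨x, hx, hux.symm⟩

theorem surjOn_hammingDist_parityClass (hU : QClosed n U) {u : Fin n → Bool} (hu : u ∈ U)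
    (q : ZMod 2) :
    Set.SurjOn (hammingDist u) (parityClass U (weightParity u + q))
      ({d ∈ range (n + 1) | (d : ZMod 2) = q} : Finset ℕ) := by
  intro d hd
  simp only [mem_coe, mem_filter, mem_range] at hd
  obtain ⟨x, hx, rfl⟩ := hU.exists_mem_hammingDist_eq hu (Nat.le_of_lt_succ hd.1)
  refine ⟨x, ?_, rfl⟩
  simp only [parityClass, mem_coe, mem_filter]
  rw [weightParity_eq_add_hammingDist u x, hd.2]
  exact ⟨hx, rfl⟩

theorem card_parityClass_ge {m : ℕ} (hU : QClosed n U) (hn : n = 2 * m + 1) (p : ZMod 2) :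
    m + 1 ≤ #(parityClass U p) := by
  obtain ⟨u, hu⟩ := hU.1
  have hsurj := hU.surjOn_hammingDist_parityClass hu (p - weightParity u)
  rw [add_sub_cancel, show n + 1 = 2 * (m + 1) by omega] at hsurj
  simpa [card_filter_range_two_mul_natCast_eq] using card_le_card_of_surjOn _ hsurj

theorem existsUnique_hammingDist_eq_two {m : ℕ} (hU : QClosed n U) (hn : n = 2 * m + 1)
    (hm : 1 ≤ m) {u : Fin n → Bool} (hu : u ∈ U)
    (hC : #(parityClass U (weightParity u)) = m + 1) :
    ∃! x, x ∈ parityClass U (weightParity u) ∧ hammingDist u x = 2 := by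
  have hmaps := mapsTo_hammingDist_parityClass U u 0
  have hsurj := hU.surjOn_hammingDist_parityClass hu 0
  rw [add_zero, Fintype.card_fin] at hmaps
  rw [add_zero] at hsurj
  have hinj := injOn_of_surjOn_of_card_le _ hmaps hsurj (by
    rw [hC, show n + 1 = 2 * (m + 1) by omega, card_filter_range_two_mul_natCast_eq])
  have htwo : 2 ∈ ({d ∈ range (n + 1) | (d : ZMod 2) = 0} : Finset ℕ) :=
    mem_filter.2 ⟨mem_range.2 (by omega), rfl⟩
  obtain ⟨x, hx, hux⟩ := hsurj htwo
  exact ⟨x, ⟨hx, hux⟩, fun y hy => hinj hy.1 hx (hy.2.trans hux.symm)⟩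

theorem even_card_parityClass {m : ℕ} (hU : QClosed n U) (hn : n = 2 * m + 1) (hm : 1 ≤ m)
    {p : ZMod 2} (hC : #(parityClass U p) = m + 1) : Even #(parityClass U p) := by
  refine even_card_of_existsUnique_partner (r := fun a b => hammingDist a b = 2)
    (fun a b h => hammingDist_comm a b ▸ h) (fun a h => by simp at h) fun a ha => ?_
  obtain ⟨haU, rfl⟩ := mem_filter.1 ha
  exact hU.existsUnique_hammingDist_eq_two hn hm haU hC

end QClosed

theorem closed_card_Q4k1 (k : ℕ) (hk : 1 ≤ k) (U : Finset (Fin (4 * k + 1) → Bool))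
    (hU : QClosed (4 * k + 1) U) :
    4 * k + 4 ≤ U.card := by
  by_contra! hlt
  have hn : 4 * k + 1 = 2 * (2 * k) + 1 := by ring
  have h0 := hU.card_parityClass_ge hn 0
  have h1 := hU.card_parityClass_ge hn 1
  have hsplit := card_eq_card_parityClass_zero_add_one U
  obtain ⟨p, hp⟩ : ∃ p, #(parityClass U p) = 2 * k + 1 := by
    by_cases h : #(parityClass U 0) = 2 * k + 1
    · exact ⟨0, h⟩
    · exact ⟨1, by omega⟩
  have heven := hU.even_card_parityClass hn (by omega) hp
  rw [hp] at heven
  exact Nat.not_even_two_mul_add_one k heven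
end

section
/- For every integer k ≥ 1, every closed set in the hypercube Q_{4k} has cardinality at least 4k + 4. -/
private lemma hd_even {n : ℕ} (a b c : Fin n → Bool) :
    Even (hammingDist a b + hammingDist b c + hammingDist a c) := by
  classical
  simp only [hammingDist, Finset.card_filter]
  rw [← Finset.sum_add_distrib, ← Finset.sum_add_distrib]
  apply Finset.even_sum
  intro i _
  cases ha : a i <;> cases hb : b i <;> cases hc : c i <;> simp [ha, hb, hc]

private lemma hd_even_trans {n : ℕ} {a b c : Fin n → Bool}
    (h1 : Even (hammingDist a b)) (h2 : Even (hammingDist b c)) :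
    Even (hammingDist a c) := by
  have h := hd_even a b c
  rw [Nat.even_iff] at *
  omega

private lemma exists_at_dist {n : ℕ} (w : Fin n → Bool) {d : ℕ} (hd : d ≤ n) :
    ∃ v : Fin n → Bool, hammingDist w v = d := by
  classical
  refine ⟨fun i => if (i : ℕ) < d then !(w i) else w i, ?_⟩
  rw [hammingDist]
  have he : (Finset.univ.filter fun i : Fin n =>
      w i ≠ (if (i : ℕ) < d then !(w i) else w i))
      = Finset.univ.filter fun i : Fin n => (i : ℕ) < d := by
    ext i
    by_cases h : (i : ℕ) < d <;> simp [h]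
  rw [he, ← Finset.card_range d]
  apply Finset.card_bij (fun (i : Fin n) _ => (i : ℕ))
  · intro a ha
    simp only [Finset.mem_filter] at ha
    simpa using ha.2
  · intro a _ b _ h
    exact Fin.val_injective h
  · intro b hb
    simp only [Finset.mem_range] at hb
    exact ⟨⟨b, lt_of_lt_of_le hb hd⟩, by simp [hb], rfl⟩

private lemma eq_compl_of_dist {n : ℕ} {w x : Fin n → Bool}
    (h : hammingDist w x = n) : x = fun i => !(w i) := by
  classical
  have huniv : (Finset.univ.filter fun i : Fin n => w i ≠ x i) = Finset.univ := by
    apply Finset.eq_univ_of_card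
    rw [← hammingDist, h]
    simp
  funext i
  have hi : w i ≠ x i := by
    have := huniv ▸ Finset.mem_univ i
    exact (Finset.mem_filter.mp this).2
  cases hw : w i <;> cases hx : x i <;> simp_all

private lemma dist_compl_add {n : ℕ} (w m : Fin n → Bool) :
    hammingDist w m + hammingDist (fun i => !(w i)) m = n := by
  classical
  rw [hammingDist, hammingDist]
  have he : (Finset.univ.filter fun i : Fin n => (fun j => !(w j)) i ≠ m i)
      = Finset.univ.filter fun i : Fin n => ¬(w i ≠ m i) := by
    ext i
    cases hw : w i <;> cases hm : m i <;> simp [hw, hm]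
  rw [he, Finset.card_filter_add_card_filter_not]
  simp

private lemma classCard {k : ℕ} (hk : 1 ≤ k) (U : Finset (Fin (4 * k) → Bool))
    (hU : QClosed (4 * k) U) (w : Fin (4 * k) → Bool) (hw : w ∈ U) :
    2 * k + 2 ≤ (U.filter fun x => Even (hammingDist w x)).card := by
  classical
  obtain ⟨-, hC⟩ := hU
  set A := U.filter fun x => Even (hammingDist w x) with hA
  -- get m at distance 2k from w
  obtain ⟨v1, hv1⟩ := exists_at_dist w (show 2 * k ≤ 4 * k by omega)
  obtain ⟨m, hmU, hmd⟩ := hC w hw v1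
  rw [hv1] at hmd
  -- get the complement of w in U
  obtain ⟨v2, hv2⟩ := exists_at_dist w (le_refl (4 * k))
  obtain ⟨x2, hx2U, hx2d⟩ := hC w hw v2
  rw [hv2] at hx2d
  have hx2 : x2 = fun i => !(w i) := eq_compl_of_dist hx2d.symm
  set wb : Fin (4 * k) → Bool := fun i => !(w i) with hwb
  have hwbU : wb ∈ U := hx2 ▸ hx2U
  have hdwwb : hammingDist w wb = 4 * k := hx2 ▸ hx2d.symm
  have hdwm : hammingDist w m = 2 * k := hmd.symm
  have hdwbm : hammingDist wb m = 2 * k := by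
    have h := dist_compl_add w m
    rw [hdwm, ← hwb] at h
    omega
  have hmA : m ∈ A := by
    rw [hA, Finset.mem_filter]
    exact ⟨hmU, by rw [hdwm]; exact even_two_mul k⟩
  have hwA : w ∈ A := by
    rw [hA, Finset.mem_filter]
    simp [hw]
  have hwbA : wb ∈ A := by
    rw [hA, Finset.mem_filter]
    exact ⟨hwbU, by rw [hdwwb]; exact ⟨2 * k, by ring⟩⟩
  have hwbne : wb ≠ w := by
    intro h
    rw [h] at hdwwb
    simp at hdwwb
    omega
  set B := A.erase w with hB
  have hwbB : wb ∈ B := Finset.mem_erase.mpr ⟨hwbne, hwbA⟩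
  -- every even distance 2j, j ≤ 2k, is realized from m within B
  have key : ∀ j ∈ Finset.range (2 * k + 1),
      2 * j ∈ B.image fun x => hammingDist m x := by
    intro j hj
    rw [Finset.mem_range] at hj
    obtain ⟨vj, hvj⟩ := exists_at_dist m (show 2 * j ≤ 4 * k by omega)
    obtain ⟨y, hyU, hyd⟩ := hC m hmU vj
    rw [hvj] at hyd
    have hymd : hammingDist m y = 2 * j := hyd.symm
    have hyA : y ∈ A := by
      rw [hA, Finset.mem_filter]
      refine ⟨hyU, ?_⟩
      have h1 : Even (hammingDist w m) := by rw [hdwm]; exact even_two_mul k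
      have h2 : Even (hammingDist m y) := by rw [hymd]; exact even_two_mul j
      exact hd_even_trans h1 h2
    by_cases hyw : y = w
    · -- then 2j = dist m w = 2k, and wb also has distance 2k from m
      have h2j : 2 * j = 2 * k := by
        rw [hyw] at hymd
        rw [hammingDist_comm] at hymd
        omega
      refine Finset.mem_image.mpr ⟨wb, hwbB, ?_⟩
      rw [hammingDist_comm]
      omega
    · refine Finset.mem_image.mpr ⟨y, Finset.mem_erase.mpr ⟨hyw, hyA⟩, hymd⟩
  have hsub : (Finset.range (2 * k + 1)).image (fun j => 2 * j)
      ⊆ B.image fun x => hammingDist m x := by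
    intro d hd
    obtain ⟨j, hj, rfl⟩ := Finset.mem_image.mp hd
    exact key j hj
  have h1 : 2 * k + 1 ≤ (B.image fun x => hammingDist m x).card := by
    have := Finset.card_le_card hsub
    rwa [Finset.card_image_of_injective _ (fun a b h => by omega),
      Finset.card_range] at this
  have h2 : (B.image fun x => hammingDist m x).card ≤ B.card :=
    Finset.card_image_le
  have h3 : B.card + 1 = A.card := Finset.card_erase_add_one hwA
  omega

theorem closed_card_Q4k (k : ℕ) (hk : 1 ≤ k) (U : Finset (Fin (4 * k) → Bool))
    (hU : QClosed (4 * k) U) :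
    4 * k + 4 ≤ U.card := by
  classical
  obtain ⟨⟨w, hw⟩, hC⟩ := hU
  -- find w' at odd distance (distance 1) from w
  obtain ⟨v1, hv1⟩ := exists_at_dist w (show 1 ≤ 4 * k by omega)
  obtain ⟨w', hw'U, hw'd⟩ := hC w hw v1
  rw [hv1] at hw'd
  have hodd : hammingDist w w' = 1 := hw'd.symm
  set A := U.filter fun x => Even (hammingDist w x) with hA
  set A' := U.filter fun x => Even (hammingDist w' x) with hA'
  have hdisj : Disjoint A A' := by
    rw [Finset.disjoint_left]
    intro x hx hx'
    have h1 : Even (hammingDist w x) := (Finset.mem_filter.mp hx).2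
    have h2 : Even (hammingDist w' x) := (Finset.mem_filter.mp hx').2
    have h3 := hd_even w w' x
    rw [Nat.even_iff] at h1 h2 h3
    rw [hodd] at h3
    omega
  have hcard : A.card + A'.card ≤ U.card := by
    rw [← Finset.card_union_of_disjoint hdisj]
    apply Finset.card_le_card
    intro x hx
    rcases Finset.mem_union.mp hx with h | h
    · exact (Finset.mem_filter.mp h).1
    · exact (Finset.mem_filter.mp h).1
  have c1 := classCard hk U ⟨⟨w, hw⟩, hC⟩ w hw
  have c2 := classCard hk U ⟨⟨w, hw⟩, hC⟩ w' hw'U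
  rw [← hA] at c1
  rw [← hA'] at c2
  omega
end
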